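/- arXiv:2307.03791 — 7 statements merged into one kernel-verified Lean document; each statement's English description precedes it below -/
import Mathlib

section
/- Assume Disc F ⊆ {0} and that the origin is a singular point of G, i.e., dG(0) : ℝ^N → ℝ^K is not surjective. Then Sing H = F⁻¹(Sing G) ∩ U, where H = G ∘ F. -/
open Metric Set Function Topology

noncomputable section

/-- The singular set of a map: points where the total derivative is not surjective. -/
def Sing {E F : Type*} [NormedAddCommGroup E] [NormedSpace ℝ E] [NormedAddCommGroup F]
    [NormedSpace ℝ F] (P : E → F) : Set E :=
  {x | ¬ Function.Surjective ⇑(fderiv ℝ P x)}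

/-- The Milnor set of a map (with respect to the Euclidean distance `‖x‖²`):
points where the derivative of `x ↦ (P x, ‖x‖²)` is not surjective. -/
def MilnorSet {E F : Type*} [NormedAddCommGroup E] [NormedSpace ℝ E] [NormedAddCommGroup F]
    [NormedSpace ℝ F] (P : E → F) : Set E :=
  {x | ¬ Function.Surjective ⇑(fderiv ℝ (fun y => (P y, ‖y‖ ^ 2)) x)}

/-- Tameness: as set germs at the origin, `closure(M(P) \ Sing P) ∩ Sing P ⊆ {0}`. -/
def Tame {E F : Type*} [NormedAddCommGroup E] [NormedSpace ℝ E] [NormedAddCommGroup F]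
    [NormedSpace ℝ F] (P : E → F) : Prop :=
  ∃ ε > 0, closure ((MilnorSet P \ Sing P) ∩ ball (0 : E) ε) ∩ Sing P ∩ ball (0 : E) ε ⊆ {0}

/-- Assume Disc F ⊆ {0} and that the origin is a singular point of G, i.e.,
dG(0) is not surjective. Then Sing H = F⁻¹(Sing G) ∩ U, where H = G ∘ F. -/
theorem stmt_1 {M N K : ℕ} (hMN : M ≥ N) (hNK : N ≥ K) (hK2 : K ≥ 2)
    (U : Set (EuclideanSpace ℝ (Fin M))) (V : Set (EuclideanSpace ℝ (Fin N)))
    (hUopen : IsOpen U) (hU0 : (0 : EuclideanSpace ℝ (Fin M)) ∈ U)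
    (hVopen : IsOpen V) (hV0 : (0 : EuclideanSpace ℝ (Fin N)) ∈ V)
    (F : EuclideanSpace ℝ (Fin M) → EuclideanSpace ℝ (Fin N))
    (G : EuclideanSpace ℝ (Fin N) → EuclideanSpace ℝ (Fin K))
    (hF : AnalyticOnNhd ℝ F U) (hG : AnalyticOnNhd ℝ G V)
    (hF0 : F 0 = 0) (hG0 : G 0 = 0) (hFUV : F '' U ⊆ V)
    (hDiscF : F '' (Sing F ∩ U) ⊆ {0})
    (h0SingG : (0 : EuclideanSpace ℝ (Fin N)) ∈ Sing G)
    (H : EuclideanSpace ℝ (Fin M) → EuclideanSpace ℝ (Fin K)) (hH : H = G ∘ F) :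
    Sing H ∩ U = F ⁻¹' (Sing G) ∩ U := by
  subst hH
  ext x
  simp only [mem_inter_iff, mem_preimage, and_congr_left_iff]
  intro hxU
  have hFx : F x ∈ V := hFUV ⟨x, hxU, rfl⟩
  have hdF : DifferentiableAt ℝ F x := (hF x hxU).differentiableAt
  have hdG : DifferentiableAt ℝ G (F x) := (hG _ hFx).differentiableAt
  have hcomp : fderiv ℝ (G ∘ F) x = (fderiv ℝ G (F x)).comp (fderiv ℝ F x) :=
    fderiv_comp x hdG hdF
  constructor
  · intro hx
    by_contra hGx
    simp only [Sing, mem_setOf_eq, not_not] at hGx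
    by_cases hxS : x ∈ Sing F
    · have hFx0 : F x = 0 := hDiscF ⟨x, ⟨hxS, hxU⟩, rfl⟩
      rw [hFx0] at hGx
      exact h0SingG hGx
    · simp only [Sing, mem_setOf_eq, not_not] at hxS
      apply hx
      rw [hcomp, ContinuousLinearMap.coe_comp']
      exact hGx.comp hxS
  · intro hGx hx
    rw [hcomp, ContinuousLinearMap.coe_comp'] at hx
    exact hGx hx.of_comp
end
end

section
/- Assume Disc F ⊆ {0}. Then, on U, Sing H ⊆ M(H) and M(H) ⊆ M(F) ∪ Sing H, where H = G ∘ F. -/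
open Metric Set Function Topology

noncomputable section

/-- Linear algebra lemma: if `(A, q)` is surjective and `B ∘ A` is surjective, then
`(B ∘ A, q)` is surjective. -/
lemma surj_prod_comp {E F G : Type*} [NormedAddCommGroup E] [NormedSpace ℝ E]
    [NormedAddCommGroup F] [NormedSpace ℝ F] [NormedAddCommGroup G] [NormedSpace ℝ G]
    (A : E →L[ℝ] F) (B : F →L[ℝ] G) (q : E →L[ℝ] ℝ)
    (hA : Function.Surjective ⇑(A.prod q)) (hBA : Function.Surjective ⇑(B.comp A)) :
    Function.Surjective ⇑((B.comp A).prod q) := by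
  rintro ⟨c, t⟩
  obtain ⟨u, hu⟩ := hBA c
  obtain ⟨w, hw⟩ := hA (0, t - q u)
  simp only [ContinuousLinearMap.prod_apply, Prod.mk.injEq] at hw
  refine ⟨u + w, ?_⟩
  simp only [ContinuousLinearMap.prod_apply, ContinuousLinearMap.comp_apply, map_add,
    hw.1, hw.2, map_zero, Prod.mk_add_mk, add_zero, Prod.mk.injEq]
  exact ⟨hu, by ring⟩

/-- Assume Disc F ⊆ {0}. Then, on U, Sing H ⊆ M(H) and
M(H) ⊆ M(F) ∪ Sing H, where H = G ∘ F. -/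
theorem stmt_2 {M N K : ℕ} (hMN : M ≥ N) (hNK : N ≥ K) (hK2 : K ≥ 2)
    (U : Set (EuclideanSpace ℝ (Fin M))) (V : Set (EuclideanSpace ℝ (Fin N)))
    (hUopen : IsOpen U) (hU0 : (0 : EuclideanSpace ℝ (Fin M)) ∈ U)
    (hVopen : IsOpen V) (hV0 : (0 : EuclideanSpace ℝ (Fin N)) ∈ V)
    (F : EuclideanSpace ℝ (Fin M) → EuclideanSpace ℝ (Fin N))
    (G : EuclideanSpace ℝ (Fin N) → EuclideanSpace ℝ (Fin K))
    (hF : AnalyticOnNhd ℝ F U) (hG : AnalyticOnNhd ℝ G V)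
    (hF0 : F 0 = 0) (hG0 : G 0 = 0) (hFUV : F '' U ⊆ V)
    (hDiscF : F '' (Sing F ∩ U) ⊆ {0})
    (H : EuclideanSpace ℝ (Fin M) → EuclideanSpace ℝ (Fin K)) (hH : H = G ∘ F) :
    (Sing H ∩ U ⊆ MilnorSet H) ∧ (MilnorSet H ∩ U ⊆ MilnorSet F ∪ Sing H) := by
  subst hH
  have hnsq : ∀ x : EuclideanSpace ℝ (Fin M),
      DifferentiableAt ℝ (fun y : EuclideanSpace ℝ (Fin M) => ‖y‖ ^ 2) x := fun x =>
    ((contDiff_norm_sq ℝ (n := 1)).differentiable one_ne_zero).differentiableAt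
  constructor
  · rintro x ⟨hxS, hxU⟩
    intro hsurj
    apply hxS
    have hFd : DifferentiableAt ℝ F x := (hF x hxU).differentiableAt
    have hGd : DifferentiableAt ℝ G (F x) := (hG _ (hFUV ⟨x, hxU, rfl⟩)).differentiableAt
    have hHd : DifferentiableAt ℝ (G ∘ F) x := hGd.comp x hFd
    have hpair : HasFDerivAt (fun y => ((G ∘ F) y, ‖y‖ ^ 2))
        ((fderiv ℝ (G ∘ F) x).prod
          (fderiv ℝ (fun y : EuclideanSpace ℝ (Fin M) => ‖y‖ ^ 2) x)) x :=
      HasFDerivAt.prodMk hHd.hasFDerivAt (hnsq x).hasFDerivAt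
    rw [hpair.fderiv] at hsurj
    intro c
    obtain ⟨u, hu⟩ := hsurj (c, 0)
    simp only [ContinuousLinearMap.prod_apply, Prod.mk.injEq] at hu
    exact ⟨u, hu.1⟩
  · rintro x ⟨hxM, hxU⟩
    by_cases hS : x ∈ Sing (G ∘ F)
    · exact Or.inr hS
    left
    intro hFsurj
    apply hxM
    have hFd : DifferentiableAt ℝ F x := (hF x hxU).differentiableAt
    have hGd : DifferentiableAt ℝ G (F x) := (hG _ (hFUV ⟨x, hxU, rfl⟩)).differentiableAt
    have hHd : DifferentiableAt ℝ (G ∘ F) x := hGd.comp x hFd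
    have hchain : fderiv ℝ (G ∘ F) x = (fderiv ℝ G (F x)).comp (fderiv ℝ F x) :=
      fderiv_comp x hGd hFd
    have hFpair : HasFDerivAt (fun y => (F y, ‖y‖ ^ 2))
        ((fderiv ℝ F x).prod
          (fderiv ℝ (fun y : EuclideanSpace ℝ (Fin M) => ‖y‖ ^ 2) x)) x :=
      HasFDerivAt.prodMk hFd.hasFDerivAt (hnsq x).hasFDerivAt
    rw [hFpair.fderiv] at hFsurj
    have hBA : Function.Surjective ⇑((fderiv ℝ G (F x)).comp (fderiv ℝ F x)) := by
      have := not_not.mp hS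
      rwa [hchain] at this
    have hHpair : HasFDerivAt (fun y => ((G ∘ F) y, ‖y‖ ^ 2))
        ((fderiv ℝ (G ∘ F) x).prod
          (fderiv ℝ (fun y : EuclideanSpace ℝ (Fin M) => ‖y‖ ^ 2) x)) x :=
      HasFDerivAt.prodMk hHd.hasFDerivAt (hnsq x).hasFDerivAt
    rw [hHpair.fderiv, hchain]
    exact surj_prod_comp _ _ _ hFsurj hBA
end
end

section
/- Assume Disc F ⊆ {0} and that dG(0) : ℝ^N → ℝ^K is not surjective. Then, on U, M(H) \ Sing H ⊆ M(F) \ V_F, where H = G ∘ F. -/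
open Metric Set Function Topology

noncomputable section

/-- Assume Disc F ⊆ {0} and that dG(0) is not surjective. Then, on U,
M(H) \ Sing H ⊆ M(F) \ V_F, where H = G ∘ F. -/
theorem stmt_3 {M N K : ℕ} (hMN : M ≥ N) (hNK : N ≥ K) (hK2 : K ≥ 2)
    (U : Set (EuclideanSpace ℝ (Fin M))) (V : Set (EuclideanSpace ℝ (Fin N)))
    (hUopen : IsOpen U) (hU0 : (0 : EuclideanSpace ℝ (Fin M)) ∈ U)
    (hVopen : IsOpen V) (hV0 : (0 : EuclideanSpace ℝ (Fin N)) ∈ V)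
    (F : EuclideanSpace ℝ (Fin M) → EuclideanSpace ℝ (Fin N))
    (G : EuclideanSpace ℝ (Fin N) → EuclideanSpace ℝ (Fin K))
    (hF : AnalyticOnNhd ℝ F U) (hG : AnalyticOnNhd ℝ G V)
    (hF0 : F 0 = 0) (hG0 : G 0 = 0) (hFUV : F '' U ⊆ V)
    (hDiscF : F '' (Sing F ∩ U) ⊆ {0})
    (h0SingG : (0 : EuclideanSpace ℝ (Fin N)) ∈ Sing G)
    (H : EuclideanSpace ℝ (Fin M) → EuclideanSpace ℝ (Fin K)) (hH : H = G ∘ F) :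
    (MilnorSet H \ Sing H) ∩ U ⊆ MilnorSet F \ (F ⁻¹' {0}) := by
  rintro x ⟨⟨hxM, hxS⟩, hxU⟩
  have hFx : DifferentiableAt ℝ F x := (hF x hxU).differentiableAt
  have hFxV : F x ∈ V := hFUV ⟨x, hxU, rfl⟩
  have hGx : DifferentiableAt ℝ G (F x) := (hG _ hFxV).differentiableAt
  have hHd : fderiv ℝ H x = (fderiv ℝ G (F x)).comp (fderiv ℝ F x) := by
    rw [hH]; exact fderiv_comp x hGx hFx
  have hSurjH : Function.Surjective ⇑(fderiv ℝ H x) := not_not.mp hxS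
  have hFx0 : F x ≠ 0 := by
    intro h0
    apply h0SingG
    have := hSurjH
    rw [hHd, h0] at this
    exact (Function.Surjective.of_comp this)
  have hρ : DifferentiableAt ℝ (fun y : EuclideanSpace ℝ (Fin M) => ‖y‖ ^ 2) x :=
    ((contDiff_norm_sq ℝ).differentiable one_ne_zero).differentiableAt
  set ρ' := fderiv ℝ (fun y : EuclideanSpace ℝ (Fin M) => ‖y‖ ^ 2) x with hρ'
  refine ⟨?_, hFx0⟩
  by_contra hMF
  have hsurjF : Function.Surjective
      ⇑(fderiv ℝ (fun y => (F y, ‖y‖ ^ 2)) x) := not_not.mp hMF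
  have hpairF : fderiv ℝ (fun y => (F y, ‖y‖ ^ 2)) x = (fderiv ℝ F x).prod ρ' :=
    (HasFDerivAt.prodMk hFx.hasFDerivAt hρ.hasFDerivAt).fderiv
  rw [hpairF] at hsurjF
  obtain ⟨w, hw⟩ := hsurjF ((0 : EuclideanSpace ℝ (Fin N)), (1 : ℝ))
  have hw1 : fderiv ℝ F x w = 0 := congrArg Prod.fst hw
  have hw2 : ρ' w = 1 := congrArg Prod.snd hw
  refine hxM ?_
  have hHx : DifferentiableAt ℝ H x := by rw [hH]; exact hGx.comp x hFx
  have hpairH : fderiv ℝ (fun y => (H y, ‖y‖ ^ 2)) x = (fderiv ℝ H x).prod ρ' :=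
    (HasFDerivAt.prodMk hHx.hasFDerivAt hρ.hasFDerivAt).fderiv
  show Function.Surjective _
  rw [hpairH]
  rintro ⟨c, t⟩
  obtain ⟨v, hv⟩ := hSurjH c
  refine ⟨v + (t - ρ' v) • w, ?_⟩
  have hHw : fderiv ℝ H x w = 0 := by
    rw [hHd]; simp [hw1]
  simp only [ContinuousLinearMap.prod_apply, map_add, map_smul, hHw, hv, hw2,
    smul_zero, add_zero, smul_eq_mul, mul_one]
  simp
end
end

section
/- Let G : U₁ → ℝ^N be a real analytic map on an open neighborhood U₁ ∋ 0 in ℝ^M with G(0) = 0, let ρ be a proper distance-like function on U₁, and let F be a smooth diffeomorphism from an open neighborhood U₂ ∋ 0 in ℝ^M onto U₁ with F(0) = 0. If G is tame with respect to ρ, then the pullback G ∘ F is tame with respect to the pullback function ρ ∘ F. -/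
open Metric Set Function Topology

noncomputable section

/-- The Milnor set of `P` relative to a function `ρ`:
points where the derivative of `x ↦ (P x, ρ x)` is not surjective. -/
def MilnorSetRho {E F : Type*} [NormedAddCommGroup E] [NormedSpace ℝ E] [NormedAddCommGroup F]
    [NormedSpace ℝ F] (P : E → F) (ρ : E → ℝ) : Set E :=
  {x | ¬ Function.Surjective ⇑(fderiv ℝ (fun y => (P y, ρ y)) x)}

/-- Tameness with respect to `ρ`: as set germs at the origin,
`closure(M_ρ(P) \ Sing P) ∩ Sing P ⊆ {0}`. -/
def TameRho {E F : Type*} [NormedAddCommGroup E] [NormedSpace ℝ E] [NormedAddCommGroup F]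
    [NormedSpace ℝ F] (P : E → F) (ρ : E → ℝ) : Prop :=
  ∃ ε > 0, closure ((MilnorSetRho P ρ \ Sing P) ∩ ball (0 : E) ε) ∩ Sing P ∩ ball (0 : E) ε ⊆ {0}

/-- A proper distance-like function on `W`: smooth, nonnegative, proper
(preimages of compact sets are compact) and vanishing only at the origin. -/
def DistLike {E : Type*} [NormedAddCommGroup E] [NormedSpace ℝ E] (ρ : E → ℝ) (W : Set E) :
    Prop :=
  ContDiffOn ℝ (⊤ : ℕ∞) ρ W ∧ (∀ x ∈ W, 0 ≤ ρ x) ∧ (∀ x ∈ W, (ρ x = 0 ↔ x = 0)) ∧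
    ∀ C : Set ℝ, IsCompact C → IsCompact {x ∈ W | ρ x ∈ C}

/-- Auxiliary: if `F` is differentiable at `x` with injective derivative (in a
finite-dimensional space), then the derivative of `P ∘ F` at `x` is surjective iff
the derivative of `P` at `F x` is. -/
lemma surj_fderiv_comp {E Y : Type*} [NormedAddCommGroup E] [NormedSpace ℝ E]
    [FiniteDimensional ℝ E] [NormedAddCommGroup Y] [NormedSpace ℝ Y]
    {F : E → E} {x : E} (hFd : DifferentiableAt ℝ F x)
    (hinj : Function.Injective ⇑(fderiv ℝ F x))
    {P : E → Y} (hP : DifferentiableAt ℝ P (F x)) :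
    Function.Surjective ⇑(fderiv ℝ (P ∘ F) x) ↔
      Function.Surjective ⇑(fderiv ℝ P (F x)) := by
  have hsurj : Function.Surjective ⇑(fderiv ℝ F x) := by
    have := (LinearMap.injective_iff_surjective (f := (fderiv ℝ F x : E →ₗ[ℝ] E))).mp hinj
    exact this
  rw [fderiv_comp x hP hFd, ContinuousLinearMap.coe_comp']
  exact ⟨fun h => h.of_comp, fun h => h.comp hsurj⟩

/-- If G is a real analytic map on U₁ with G(0) = 0 which is tame with
respect to a proper distance-like function ρ on U₁, and F is a smooth diffeomorphism
from U₂ onto U₁ with F(0) = 0, then the pullback G ∘ F is tame with respect to ρ ∘ F. -/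
theorem stmt_8 {M N : ℕ}
    (U₁ U₂ : Set (EuclideanSpace ℝ (Fin M)))
    (hU₁open : IsOpen U₁) (hU₁0 : (0 : EuclideanSpace ℝ (Fin M)) ∈ U₁)
    (hU₂open : IsOpen U₂) (hU₂0 : (0 : EuclideanSpace ℝ (Fin M)) ∈ U₂)
    (G : EuclideanSpace ℝ (Fin M) → EuclideanSpace ℝ (Fin N))
    (hG : AnalyticOnNhd ℝ G U₁) (hG0 : G 0 = 0)
    (ρ : EuclideanSpace ℝ (Fin M) → ℝ) (hρ : DistLike ρ U₁)
    (F Finv : EuclideanSpace ℝ (Fin M) → EuclideanSpace ℝ (Fin M))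
    (hFsmooth : ContDiffOn ℝ (⊤ : ℕ∞) F U₂) (hFinvsmooth : ContDiffOn ℝ (⊤ : ℕ∞) Finv U₁)
    (hFimg : F '' U₂ = U₁) (hF0 : F 0 = 0)
    (hFleft : ∀ x ∈ U₂, Finv (F x) = x) (hFright : ∀ y ∈ U₁, F (Finv y) = y)
    (htame : TameRho G ρ) :
    TameRho (G ∘ F) (ρ ∘ F) := by
  obtain ⟨ε₀, hε₀, htame⟩ := htame

  -- differentiability of F on U₂
  have hFdiff : ∀ x ∈ U₂, DifferentiableAt ℝ F x := fun x hx =>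
    (hFsmooth.differentiableOn (by simp)).differentiableAt (hU₂open.mem_nhds hx)
  have hFxU₁ : ∀ x ∈ U₂, F x ∈ U₁ := fun x hx => hFimg ▸ mem_image_of_mem F hx
  -- the derivative of F is injective on U₂
  have hinj : ∀ x ∈ U₂, Function.Injective ⇑(fderiv ℝ F x) := by
    intro x hx
    have hFinvd : DifferentiableAt ℝ Finv (F x) :=
      (hFinvsmooth.differentiableOn (by simp)).differentiableAt
        (hU₁open.mem_nhds (hFxU₁ x hx))
    have hcomp : fderiv ℝ (Finv ∘ F) x =
        (fderiv ℝ Finv (F x)).comp (fderiv ℝ F x) :=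
      fderiv_comp x hFinvd (hFdiff x hx)
    have heq : (Finv ∘ F) =ᶠ[𝓝 x] id :=
      Filter.eventuallyEq_of_mem (hU₂open.mem_nhds hx) (fun y hy => hFleft y hy)
    have hid : (fderiv ℝ Finv (F x)).comp (fderiv ℝ F x) =
        ContinuousLinearMap.id ℝ _ := by
      rw [← hcomp, heq.fderiv_eq, fderiv_id]
    intro a b hab
    have ha : fderiv ℝ Finv (F x) (fderiv ℝ F x a) = a := by
      rw [← ContinuousLinearMap.comp_apply, hid]; rfl
    have hb : fderiv ℝ Finv (F x) (fderiv ℝ F x b) = b := by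
      rw [← ContinuousLinearMap.comp_apply, hid]; rfl
    rw [← ha, ← hb, hab]
  -- differentiability of the relevant maps at points of U₁
  have hGd : ∀ y ∈ U₁, DifferentiableAt ℝ G y := fun y hy => (hG y hy).differentiableAt
  have hρd : ∀ y ∈ U₁, DifferentiableAt ℝ ρ y := fun y hy =>
    (hρ.1.differentiableOn (by simp)).differentiableAt (hU₁open.mem_nhds hy)
  -- Sing and Milnor set transfer under F
  have hSing : ∀ x ∈ U₂, (x ∈ Sing (G ∘ F) ↔ F x ∈ Sing G) := by
    intro x hx
    simp only [Sing, mem_setOf_eq, not_iff_not]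
    exact surj_fderiv_comp (hFdiff x hx) (hinj x hx) (hGd (F x) (hFxU₁ x hx))
  have hMil : ∀ x ∈ U₂,
      (x ∈ MilnorSetRho (G ∘ F) (ρ ∘ F) ↔ F x ∈ MilnorSetRho G ρ) := by
    intro x hx
    simp only [MilnorSetRho, mem_setOf_eq, not_iff_not]
    have hpair : DifferentiableAt ℝ (fun z => (G z, ρ z)) (F x) :=
      DifferentiableAt.prodMk (hGd (F x) (hFxU₁ x hx)) (hρd (F x) (hFxU₁ x hx))
    have hcomp := surj_fderiv_comp (hFdiff x hx) (hinj x hx) hpair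
    have : (fun y => ((G ∘ F) y, (ρ ∘ F) y)) = (fun z => (G z, ρ z)) ∘ F := rfl
    rw [this]
    exact hcomp
  -- choose ε : ball 0 ε ⊆ U₂ and F '' ball 0 ε ⊆ ball 0 ε₀
  have hcont0 : ContinuousAt F 0 :=
    hFsmooth.continuousOn.continuousAt (hU₂open.mem_nhds hU₂0)
  have hpre : F ⁻¹' ball (0 : EuclideanSpace ℝ (Fin M)) ε₀ ∈ 𝓝 (0 : EuclideanSpace ℝ (Fin M)) := by
    apply hcont0.preimage_mem_nhds
    rw [hF0]
    exact ball_mem_nhds 0 hε₀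
  have hnhds : F ⁻¹' ball (0 : EuclideanSpace ℝ (Fin M)) ε₀ ∩ U₂ ∈ 𝓝 (0 : EuclideanSpace ℝ (Fin M)) :=
    Filter.inter_mem hpre (hU₂open.mem_nhds hU₂0)
  obtain ⟨ε, hε, hball⟩ := Metric.mem_nhds_iff.mp hnhds
  refine ⟨ε, hε, ?_⟩
  rintro x ⟨⟨hxcl, hxSing⟩, hxball⟩
  have hxU₂ : x ∈ U₂ := (hball hxball).2
  have hFxball : F x ∈ ball (0 : EuclideanSpace ℝ (Fin M)) ε₀ := (hball hxball).1
  -- F x lies in the closure of the corresponding set for G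
  set A := (MilnorSetRho (G ∘ F) (ρ ∘ F) \ Sing (G ∘ F)) ∩ ball (0 : EuclideanSpace ℝ (Fin M)) ε with hA
  have hAsub : F '' A ⊆ (MilnorSetRho G ρ \ Sing G) ∩ ball (0 : EuclideanSpace ℝ (Fin M)) ε₀ := by
    rintro _ ⟨a, ⟨⟨haM, haS⟩, haball⟩, rfl⟩
    have haU₂ : a ∈ U₂ := (hball haball).2
    exact ⟨⟨(hMil a haU₂).mp haM, fun h => haS ((hSing a haU₂).mpr h)⟩,
      (hball haball).1⟩
  have hFxcl : F x ∈ closure ((MilnorSetRho G ρ \ Sing G) ∩ ball (0 : EuclideanSpace ℝ (Fin M)) ε₀) := by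
    have hcx : ContinuousWithinAt F A x :=
      (hFsmooth.continuousOn.continuousAt (hU₂open.mem_nhds hxU₂)).continuousWithinAt
    exact closure_mono hAsub (hcx.mem_closure_image hxcl)
  have hFx0 : F x = 0 := htame ⟨⟨hFxcl, (hSing x hxU₂).mp hxSing⟩, hFxball⟩
  have : x = Finv (F x) := (hFleft x hxU₂).symm
  rw [hFx0, ← hF0, hFleft 0 hU₂0] at this
  exact this
end
end

section
/- Let G₁, G₂ be real analytic maps from open neighborhoods of the origin in ℝ^M to ℝ^N with G₁(0) = G₂(0) = 0, and suppose G₁ and G₂ are smoothly A-equivalent: there exist a smooth diffeomorphism φ between open neighborhoods of 0 in ℝ^M with φ(0) = 0 and a smooth diffeomorphism ψ between open neighborhoods of 0 in ℝ^N with ψ(0) = 0 such that G₂ = ψ ∘ G₁ ∘ φ near the origin. If G₁ is tame with respect to some proper distance-like function ρ₁, then there exists a proper distance-like function ρ₂ such that G₂ is tame with respect to ρ₂. -/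
open Metric Set Function Topology

noncomputable section

/-- derivative of a local diffeo is bijective -/
lemma fderiv_bij_aux {E E' : Type*} [NormedAddCommGroup E] [NormedSpace ℝ E]
    [NormedAddCommGroup E'] [NormedSpace ℝ E']
    {f : E → E'} {g : E' → E} {U : Set E} {V : Set E'} (hU : IsOpen U) (hV : IsOpen V)
    {x : E} (hx : x ∈ U) (hfx : f x ∈ V)
    (hf : DifferentiableAt ℝ f x) (hg : DifferentiableAt ℝ g (f x))
    (hgf : ∀ y ∈ U, g (f y) = y) (hfg : ∀ z ∈ V, f (g z) = z) :
    Function.Bijective ⇑(fderiv ℝ f x) := by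
  set A := fderiv ℝ f x
  set B := fderiv ℝ g (f x)
  have hA := hf.hasFDerivAt
  have hB := hg.hasFDerivAt
  have h1 : HasFDerivAt (g ∘ f) (B.comp A) x := hB.comp x hA
  have h1' : HasFDerivAt (fun y : E => y) (B.comp A) x :=
    h1.congr_of_eventuallyEq (by
      filter_upwards [hU.mem_nhds hx] with y hy
      exact (hgf y hy).symm)
  have hBA : B.comp A = ContinuousLinearMap.id ℝ E := h1'.unique (hasFDerivAt_id x)
  have hgfx : g (f x) = x := hgf x hx
  have hA2 : HasFDerivAt f A (g (f x)) := by rw [hgfx]; exact hA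
  have h2 : HasFDerivAt (f ∘ g) (A.comp B) (f x) := hA2.comp (f x) hB
  have h2' : HasFDerivAt (fun z : E' => z) (A.comp B) (f x) :=
    h2.congr_of_eventuallyEq (by
      filter_upwards [hV.mem_nhds hfx] with z hz
      exact (hfg z hz).symm)
  have hAB : A.comp B = ContinuousLinearMap.id ℝ E' := h2'.unique (hasFDerivAt_id (f x))
  constructor
  · intro v w h
    have hv := congrFun (congrArg (⇑) hBA) v
    have hw := congrFun (congrArg (⇑) hBA) w
    simp only [ContinuousLinearMap.coe_comp', Function.comp_apply,
      ContinuousLinearMap.coe_id', id] at hv hw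
    rw [← hv, ← hw, h]
  · intro w
    refine ⟨B w, ?_⟩
    have hw := congrFun (congrArg (⇑) hAB) w
    simpa using hw

lemma surj_conj_aux {E F E' F' : Type*} [NormedAddCommGroup E] [NormedSpace ℝ E]
    [NormedAddCommGroup F] [NormedSpace ℝ F] [NormedAddCommGroup E'] [NormedSpace ℝ E']
    [NormedAddCommGroup F'] [NormedSpace ℝ F']
    (A : E' →L[ℝ] E) (L : E →L[ℝ] F) (C : F →L[ℝ] F')
    (hA : Function.Surjective ⇑A) (hC : Function.Bijective ⇑C) :
    Function.Surjective ⇑(C.comp (L.comp A)) ↔ Function.Surjective ⇑L := by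
  constructor
  · intro h w
    obtain ⟨v, hv⟩ := h (C w)
    simp only [ContinuousLinearMap.coe_comp', Function.comp_apply] at hv
    exact ⟨A v, hC.1 hv⟩
  · intro h w'
    obtain ⟨w, hw⟩ := hC.2 w'
    obtain ⟨u, hu⟩ := h w
    obtain ⟨v, hv⟩ := hA u
    exact ⟨v, by simp [hv, hu, hw]⟩

/-- If G₁ and G₂ are smoothly A-equivalent real analytic map germs
(G₂ = ψ ∘ G₁ ∘ φ near 0, with φ, ψ smooth diffeomorphisms of neighborhoods of the
origins fixing 0) and G₁ is tame with respect to some proper distance-like function ρ₁,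
then there exists a proper distance-like function ρ₂ such that G₂ is tame w.r.t. ρ₂. -/
theorem stmt_9 {M N : ℕ}
    (U₁ U₂ : Set (EuclideanSpace ℝ (Fin M)))
    (hU₁open : IsOpen U₁) (hU₁0 : (0 : EuclideanSpace ℝ (Fin M)) ∈ U₁)
    (hU₂open : IsOpen U₂) (hU₂0 : (0 : EuclideanSpace ℝ (Fin M)) ∈ U₂)
    (W₁ W₂ : Set (EuclideanSpace ℝ (Fin N)))
    (hW₁open : IsOpen W₁) (hW₁0 : (0 : EuclideanSpace ℝ (Fin N)) ∈ W₁)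
    (hW₂open : IsOpen W₂) (hW₂0 : (0 : EuclideanSpace ℝ (Fin N)) ∈ W₂)
    (G₁ G₂ : EuclideanSpace ℝ (Fin M) → EuclideanSpace ℝ (Fin N))
    (hG₁ : AnalyticOnNhd ℝ G₁ U₁) (hG₂ : AnalyticOnNhd ℝ G₂ U₂)
    (hG₁0 : G₁ 0 = 0) (hG₂0 : G₂ 0 = 0)
    (φ φinv : EuclideanSpace ℝ (Fin M) → EuclideanSpace ℝ (Fin M))
    (hφsmooth : ContDiffOn ℝ (⊤ : ℕ∞) φ U₂) (hφinvsmooth : ContDiffOn ℝ (⊤ : ℕ∞) φinv U₁)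
    (hφimg : φ '' U₂ = U₁) (hφ0 : φ 0 = 0)
    (hφleft : ∀ x ∈ U₂, φinv (φ x) = x) (hφright : ∀ y ∈ U₁, φ (φinv y) = y)
    (ψ ψinv : EuclideanSpace ℝ (Fin N) → EuclideanSpace ℝ (Fin N))
    (hψsmooth : ContDiffOn ℝ (⊤ : ℕ∞) ψ W₁) (hψinvsmooth : ContDiffOn ℝ (⊤ : ℕ∞) ψinv W₂)
    (hψimg : ψ '' W₁ = W₂) (hψ0 : ψ 0 = 0)
    (hψleft : ∀ y ∈ W₁, ψinv (ψ y) = y) (hψright : ∀ z ∈ W₂, ψ (ψinv z) = z)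
    (hG₁W : G₁ '' U₁ ⊆ W₁)
    (hcomp : ∀ x ∈ U₂, G₂ x = ψ (G₁ (φ x)))
    (ρ₁ : EuclideanSpace ℝ (Fin M) → ℝ) (hρ₁ : DistLike ρ₁ U₁)
    (htame : TameRho G₁ ρ₁) :
    ∃ (ρ₂ : EuclideanSpace ℝ (Fin M) → ℝ) (W : Set (EuclideanSpace ℝ (Fin M))),
      IsOpen W ∧ (0 : EuclideanSpace ℝ (Fin M)) ∈ W ∧ DistLike ρ₂ W ∧ TameRho G₂ ρ₂ := by
  classical
  have hmemU₁ : ∀ x ∈ U₂, φ x ∈ U₁ := fun x hx => hφimg ▸ mem_image_of_mem φ hx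
  refine ⟨fun z => ρ₁ (φ z), U₂, hU₂open, hU₂0, ?_, ?_⟩
  · refine ⟨?_, ?_, ?_, ?_⟩
    · exact hρ₁.1.comp hφsmooth hmemU₁
    · intro x hx; exact hρ₁.2.1 _ (hmemU₁ x hx)
    · intro x hx
      rw [hρ₁.2.2.1 _ (hmemU₁ x hx)]
      constructor
      · intro h
        have h2 : φinv (φ x) = φinv 0 := by rw [h]
        rwa [hφleft x hx, ← hφ0, hφleft 0 hU₂0] at h2
      · intro h; rw [h, hφ0]
    · intro C hC
      have hK := hρ₁.2.2.2 C hC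
      have hset : {x ∈ U₂ | ρ₁ (φ x) ∈ C} = φinv '' {y ∈ U₁ | ρ₁ y ∈ C} := by
        ext x
        constructor
        · rintro ⟨hx, hρ⟩
          exact ⟨φ x, ⟨hmemU₁ x hx, hρ⟩, hφleft x hx⟩
        · rintro ⟨y, ⟨hy, hρ⟩, rfl⟩
          have hy' : y ∈ φ '' U₂ := by rw [hφimg]; exact hy
          obtain ⟨x, hx, rfl⟩ := hy'
          simp only [mem_sep_iff, mem_setOf_eq, hφleft x hx]
          exact ⟨hx, hρ⟩
      rw [hset]
      exact hK.image_of_continuousOn (hφinvsmooth.continuousOn.mono fun y hy => hy.1)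
  · obtain ⟨ε, hε, hsub⟩ := htame
    have key : ∀ x ∈ U₂,
        (x ∈ Sing G₂ ↔ φ x ∈ Sing G₁) ∧
        (x ∈ MilnorSetRho G₂ (fun z => ρ₁ (φ z)) ↔ φ x ∈ MilnorSetRho G₁ ρ₁) := by
      intro x hx
      have hy : φ x ∈ U₁ := hmemU₁ x hx
      have hw : G₁ (φ x) ∈ W₁ := hG₁W (mem_image_of_mem G₁ hy)
      have hψw : ψ (G₁ (φ x)) ∈ W₂ := hψimg ▸ mem_image_of_mem ψ hw
      have hφd : DifferentiableAt ℝ φ x :=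
        (hφsmooth.contDiffAt (hU₂open.mem_nhds hx)).differentiableAt (by simp)
      have hφinvd : DifferentiableAt ℝ φinv (φ x) :=
        (hφinvsmooth.contDiffAt (hU₁open.mem_nhds hy)).differentiableAt (by simp)
      have hG₁d : DifferentiableAt ℝ G₁ (φ x) := (hG₁ _ hy).differentiableAt
      have hρ₁d : DifferentiableAt ℝ ρ₁ (φ x) :=
        (hρ₁.1.contDiffAt (hU₁open.mem_nhds hy)).differentiableAt (by simp)
      have hψd : DifferentiableAt ℝ ψ (G₁ (φ x)) :=
        (hψsmooth.contDiffAt (hW₁open.mem_nhds hw)).differentiableAt (by simp)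
      have hψinvd : DifferentiableAt ℝ ψinv (ψ (G₁ (φ x))) :=
        (hψinvsmooth.contDiffAt (hW₂open.mem_nhds hψw)).differentiableAt (by simp)
      have hAbij : Function.Bijective ⇑(fderiv ℝ φ x) :=
        fderiv_bij_aux hU₂open hU₁open hx hy hφd hφinvd hφleft hφright
      have hCbij : Function.Bijective ⇑(fderiv ℝ ψ (G₁ (φ x))) :=
        fderiv_bij_aux hW₁open hW₂open hw hψw hψd hψinvd hψleft hψright
      set A := fderiv ℝ φ x with hA
      set C := fderiv ℝ ψ (G₁ (φ x)) with hC
      set D := fderiv ℝ G₁ (φ x) with hD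
      have hG₂has : HasFDerivAt G₂ (C.comp (D.comp A)) x := by
        have h1 : HasFDerivAt (fun z => G₁ (φ z)) (D.comp A) x :=
          hG₁d.hasFDerivAt.comp x hφd.hasFDerivAt
        have h : HasFDerivAt (fun z => ψ (G₁ (φ z))) (C.comp (D.comp A)) x :=
          hψd.hasFDerivAt.comp x h1
        refine h.congr_of_eventuallyEq ?_
        filter_upwards [hU₂open.mem_nhds hx] with z hz
        exact hcomp z hz
      set D' := D.prod (fderiv ℝ ρ₁ (φ x)) with hD'
      have hP₁has : HasFDerivAt (fun y => (G₁ y, ρ₁ y)) D' (φ x) :=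
        HasFDerivAt.prodMk hG₁d.hasFDerivAt hρ₁d.hasFDerivAt
      set C' := C.prodMap (ContinuousLinearMap.id ℝ ℝ) with hC'
      have hC'bij : Function.Bijective ⇑C' := by
        have hcoe : ⇑C' = Prod.map ⇑C (id : ℝ → ℝ) := rfl
        rw [hcoe]
        exact Prod.map_bijective.mpr ⟨hCbij, Function.bijective_id⟩
      have hΨhas : HasFDerivAt (Prod.map ψ (id : ℝ → ℝ)) C' ((G₁ (φ x), ρ₁ (φ x))) :=
        HasFDerivAt.prodMap _ hψd.hasFDerivAt (hasFDerivAt_id _)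
      have hP₂has : HasFDerivAt (fun z => (G₂ z, ρ₁ (φ z))) (C'.comp (D'.comp A)) x := by
        have h1 : HasFDerivAt (fun z => (G₁ (φ z), ρ₁ (φ z))) (D'.comp A) x :=
          hP₁has.comp x hφd.hasFDerivAt
        have h2 : HasFDerivAt (fun z => Prod.map ψ (id : ℝ → ℝ) (G₁ (φ z), ρ₁ (φ z)))
            (C'.comp (D'.comp A)) x := by have := hΨhas.comp x h1; exact this
        refine h2.congr_of_eventuallyEq ?_
        filter_upwards [hU₂open.mem_nhds hx] with z hz
        simp [Prod.map, hcomp z hz]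
      constructor
      · simp only [Sing, mem_setOf_eq, hG₂has.fderiv]
        rw [surj_conj_aux A D C hAbij.2 hCbij]
      · simp only [MilnorSetRho, mem_setOf_eq]
        rw [hP₂has.fderiv, surj_conj_aux A D' C' hAbij.2 hC'bij, hP₁has.fderiv]
    have hφcont0 : ContinuousAt φ 0 :=
      hφsmooth.continuousOn.continuousAt (hU₂open.mem_nhds hU₂0)
    have hnhds : φ ⁻¹' (ball (0 : EuclideanSpace ℝ (Fin M)) ε) ∈
        𝓝 (0 : EuclideanSpace ℝ (Fin M)) := by
      apply hφcont0.preimage_mem_nhds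
      rw [hφ0]
      exact ball_mem_nhds _ hε
    obtain ⟨ε', hε', hball⟩ :=
      Metric.mem_nhds_iff.mp (Filter.inter_mem (hU₂open.mem_nhds hU₂0) hnhds)
    refine ⟨ε', hε', ?_⟩
    rintro z ⟨⟨hzcl, hzS⟩, hzb⟩
    have hzU₂ : z ∈ U₂ := (hball hzb).1
    have hφzball : φ z ∈ ball 0 ε := (hball hzb).2
    have hφzS : φ z ∈ Sing G₁ := ((key z hzU₂).1).mp hzS
    have hφzcl : φ z ∈ closure ((MilnorSetRho G₁ ρ₁ \ Sing G₁) ∩ ball 0 ε) := by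
      obtain ⟨u, hu, hlim⟩ := mem_closure_iff_seq_limit.mp hzcl
      refine mem_closure_iff_seq_limit.mpr ⟨fun n => φ (u n), ?_, ?_⟩
      · intro n
        obtain ⟨⟨hM, hS⟩, hb⟩ := hu n
        have hU : u n ∈ U₂ := (hball hb).1
        exact ⟨⟨((key (u n) hU).2).mp hM, fun h => hS (((key (u n) hU).1).mpr h)⟩,
          (hball hb).2⟩
      · exact Filter.Tendsto.comp
          (hφsmooth.continuousOn.continuousAt (hU₂open.mem_nhds hzU₂)) hlim
    have hφz0 : φ z = 0 := hsub ⟨⟨hφzcl, hφzS⟩, hφzball⟩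
    show z ∈ ({0} : Set (EuclideanSpace ℝ (Fin M)))
    have : z = 0 := by
      have h2 : φinv (φ z) = φinv 0 := by rw [hφz0]
      rwa [hφleft z hzU₂, ← hφ0, hφleft 0 hU₂0] at h2
    simp [this]
end
end

section
/- Assume Disc F ⊆ {0} and that dG(0) : ℝ^N → ℝ^K is not surjective, and let H = G ∘ F. Then for every ε > 0 such that the closed ball B̄_ε is contained in U, one has F(closure((M(H) \ Sing H) ∩ B̄_ε)) = closure(F((M(H) \ Sing H) ∩ B̄_ε)) = closure(F(M(H) ∩ B̄_ε) \ Sing G), where closures are taken in ℝ^M and ℝ^N respectively. -/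
open Metric Set Function Topology

noncomputable section

/-- Assume Disc F ⊆ {0} and dG(0) is not surjective, and let H = G ∘ F.
Then for every ε > 0 with B̄_ε ⊆ U,
F(closure((M(H) \ Sing H) ∩ B̄_ε)) = closure(F((M(H) \ Sing H) ∩ B̄_ε))
  = closure(F(M(H) ∩ B̄_ε) \ Sing G). -/
theorem stmt_10 {M N K : ℕ} (hMN : M ≥ N) (hNK : N ≥ K) (hK2 : K ≥ 2)
    (U : Set (EuclideanSpace ℝ (Fin M))) (V : Set (EuclideanSpace ℝ (Fin N)))
    (hUopen : IsOpen U) (hU0 : (0 : EuclideanSpace ℝ (Fin M)) ∈ U)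
    (hVopen : IsOpen V) (hV0 : (0 : EuclideanSpace ℝ (Fin N)) ∈ V)
    (F : EuclideanSpace ℝ (Fin M) → EuclideanSpace ℝ (Fin N))
    (G : EuclideanSpace ℝ (Fin N) → EuclideanSpace ℝ (Fin K))
    (hF : AnalyticOnNhd ℝ F U) (hG : AnalyticOnNhd ℝ G V)
    (hF0 : F 0 = 0) (hG0 : G 0 = 0) (hFUV : F '' U ⊆ V)
    (hDiscF : F '' (Sing F ∩ U) ⊆ {0})
    (h0SingG : (0 : EuclideanSpace ℝ (Fin N)) ∈ Sing G)
    (H : EuclideanSpace ℝ (Fin M) → EuclideanSpace ℝ (Fin K)) (hH : H = G ∘ F) :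
    ∀ ε > 0, closedBall (0 : EuclideanSpace ℝ (Fin M)) ε ⊆ U →
      F '' closure ((MilnorSet H \ Sing H) ∩ closedBall 0 ε) =
          closure (F '' ((MilnorSet H \ Sing H) ∩ closedBall 0 ε)) ∧
        closure (F '' ((MilnorSet H \ Sing H) ∩ closedBall 0 ε)) =
          closure (F '' (MilnorSet H ∩ closedBall 0 ε) \ Sing G) := by
  subst hH
  intro ε hε hball
  have hchain : ∀ x ∈ U, fderiv ℝ (G ∘ F) x = (fderiv ℝ G (F x)).comp (fderiv ℝ F x) :=
    fun x hx => fderiv_comp x (hG (F x) (hFUV ⟨x, hx, rfl⟩)).differentiableAt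
      (hF x hx).differentiableAt
  have hclos : closure ((MilnorSet (G ∘ F) \ Sing (G ∘ F)) ∩ closedBall 0 ε) ⊆
      closedBall (0 : EuclideanSpace ℝ (Fin M)) ε :=
    closure_minimal inter_subset_right isClosed_closedBall
  have hcontOn : ContinuousOn F (closure ((MilnorSet (G ∘ F) \ Sing (G ∘ F)) ∩ closedBall 0 ε)) :=
    fun x hx => ((hF x (hball (hclos hx))).continuousAt).continuousWithinAt
  constructor
  · apply Subset.antisymm
    · exact hcontOn.image_closure
    · apply closure_minimal (image_mono subset_closure)
      have hcomp : IsCompact (closure ((MilnorSet (G ∘ F) \ Sing (G ∘ F)) ∩ closedBall 0 ε)) :=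
        (isCompact_closedBall 0 ε).of_isClosed_subset isClosed_closure hclos
      exact (hcomp.image_of_continuousOn hcontOn).isClosed
  · have hsets : F '' ((MilnorSet (G ∘ F) \ Sing (G ∘ F)) ∩ closedBall 0 ε) =
        F '' (MilnorSet (G ∘ F) ∩ closedBall 0 ε) \ Sing G := by
      ext y
      constructor
      · rintro ⟨x, ⟨⟨hM, hnS⟩, hB⟩, rfl⟩
        have hxU : x ∈ U := hball hB
        refine ⟨⟨x, ⟨hM, hB⟩, rfl⟩, ?_⟩
        intro hSG
        apply hnS
        show ¬ Function.Surjective _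
        rw [hchain x hxU]
        intro hsurj
        exact hSG (Function.Surjective.of_comp hsurj)
      · rintro ⟨⟨x, ⟨hM, hB⟩, rfl⟩, hnSG⟩
        have hxU : x ∈ U := hball hB
        have hGsurj : Function.Surjective ⇑(fderiv ℝ G (F x)) := not_not.mp hnSG
        have hFsurj : Function.Surjective ⇑(fderiv ℝ F x) := by
          by_contra hns
          have : F x ∈ ({0} : Set (EuclideanSpace ℝ (Fin N))) := hDiscF ⟨x, ⟨hns, hxU⟩, rfl⟩
          rw [mem_singleton_iff] at this
          rw [this] at hnSG
          exact hnSG h0SingG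
        refine ⟨x, ⟨⟨hM, ?_⟩, hB⟩, rfl⟩
        intro hS
        apply hS
        rw [hchain x hxU]
        exact hGsurj.comp hFsurj
    rw [hsets]
end
end

section
/- Let F : ℝ⁴ → ℝ³, F(x,y,z,w) = (x, y, z(x² + y² + z⁴)), and G : ℝ³ → ℝ², G(u,v,t) = (uv, vt), and let H = G ∘ F : ℝ⁴ → ℝ², H(x,y,z,w) = (xy, yz(x² + y² + z⁴)). Then F and G are tame with Disc F ⊆ {0} and Disc G ⊆ {0}, but H is NOT tame: for every ε > 0 there exists a point x ∈ B_ε with x ≠ 0 lying in Sing H ∩ closure((M(H) \ Sing H) ∩ B_ε). -/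
open Metric Set Function Topology

noncomputable section

/-- F(x,y,z,w) = (x, y, z(x² + y² + z⁴)). -/
def F18 : EuclideanSpace ℝ (Fin 4) → EuclideanSpace ℝ (Fin 3) :=
  fun x => (WithLp.equiv 2 (Fin 3 → ℝ)).symm
    ![x 0, x 1, x 2 * ((x 0) ^ 2 + (x 1) ^ 2 + (x 2) ^ 4)]

/-- G(u,v,t) = (uv, vt). -/
def G18 : EuclideanSpace ℝ (Fin 3) → EuclideanSpace ℝ (Fin 2) :=
  fun u => (WithLp.equiv 2 (Fin 2 → ℝ)).symm ![u 0 * u 1, u 1 * u 2]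

/-- H(x,y,z,w) = (xy, yz(x² + y² + z⁴)). -/
def H18 : EuclideanSpace ℝ (Fin 4) → EuclideanSpace ℝ (Fin 2) :=
  fun x => (WithLp.equiv 2 (Fin 2 → ℝ)).symm
    ![x 0 * x 1, x 1 * (x 2 * ((x 0) ^ 2 + (x 1) ^ 2 + (x 2) ^ 4))]

abbrev E' (n : ℕ) := EuclideanSpace ℝ (Fin n)

def L4 (a b c d : ℝ) : E' 4 →L[ℝ] ℝ :=
  a • EuclideanSpace.proj 0 + b • EuclideanSpace.proj 1 + c • EuclideanSpace.proj 2
    + d • EuclideanSpace.proj 3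

@[simp] lemma L4_apply (a b c d : ℝ) (v : E' 4) :
    L4 a b c d v = a * v 0 + b * v 1 + c * v 2 + d * v 3 := by
  simp [L4]

lemma hproj4 (p : E' 4) (i : Fin 4) :
    HasFDerivAt (fun x : E' 4 => x i) (EuclideanSpace.proj i : E' 4 →L[ℝ] ℝ) p :=
  (EuclideanSpace.proj i : E' 4 →L[ℝ] ℝ).hasFDerivAt

lemma hF2comp (p : E' 4) :
    HasFDerivAt (fun x : E' 4 => x 2 * (x 0 ^ 2 + x 1 ^ 2 + x 2 ^ 4))
      (L4 (2 * p 0 * p 2) (2 * p 1 * p 2) (p 0 ^ 2 + p 1 ^ 2 + 5 * p 2 ^ 4) 0) p := by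
  have hfun : (fun x : E' 4 => x 2 * (x 0 ^ 2 + x 1 ^ 2 + x 2 ^ 4))
      = (fun x : E' 4 => x 2 * (x 0 * x 0 + x 1 * x 1 + x 2 * x 2 * (x 2 * x 2))) := by
    funext x; ring
  rw [hfun]
  have key := (hproj4 p 2).mul ((((hproj4 p 0).mul (hproj4 p 0)).add
    ((hproj4 p 1).mul (hproj4 p 1))).add
    (((hproj4 p 2).mul (hproj4 p 2)).mul ((hproj4 p 2).mul (hproj4 p 2))))
  refine key.congr_fderiv ?_
  ext v
  simp
  ring


def LF (p : E' 4) : E' 4 →L[ℝ] E' 3 :=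
  ((EuclideanSpace.equiv (Fin 3) ℝ).symm : (Fin 3 → ℝ) ≃L[ℝ] E' 3).toContinuousLinearMap.comp
    (ContinuousLinearMap.pi ![L4 1 0 0 0, L4 0 1 0 0,
      L4 (2 * p 0 * p 2) (2 * p 1 * p 2) (p 0 ^ 2 + p 1 ^ 2 + 5 * p 2 ^ 4) 0])

lemma LF_apply0 (p v : E' 4) : LF p v 0 = v 0 := by
  simp [LF]
lemma LF_apply1 (p v : E' 4) : LF p v 1 = v 1 := by
  simp [LF]
lemma LF_apply2 (p v : E' 4) :
    LF p v 2 = (2*p 0*p 2) * v 0 + (2*p 1*p 2) * v 1 + (p 0^2+p 1^2+5*p 2^4) * v 2 := by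
  simp [LF]

lemma hasFDerivAt_F18 (p : E' 4) : HasFDerivAt F18 (LF p) p := by
  have hg : HasFDerivAt (fun x : E' 4 => (![x 0, x 1, x 2 * ((x 0)^2+(x 1)^2+(x 2)^4)] : Fin 3 → ℝ))
      (ContinuousLinearMap.pi ![L4 1 0 0 0, L4 0 1 0 0,
        L4 (2 * p 0 * p 2) (2 * p 1 * p 2) (p 0 ^ 2 + p 1 ^ 2 + 5 * p 2 ^ 4) 0]) p := by
    rw [hasFDerivAt_pi']
    intro i
    rw [ContinuousLinearMap.proj_pi]
    fin_cases i
    · simpa using (hproj4 p 0).congr_fderiv (by ext v; simp)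
    · simpa using (hproj4 p 1).congr_fderiv (by ext v; simp)
    · simpa using hF2comp p
  have := ((EuclideanSpace.equiv (Fin 3) ℝ).symm.toContinuousLinearMap).hasFDerivAt.comp p hg
  exact this




-- fderiv of the pair map
lemma fderiv_pair {n m : ℕ} {P : E' n → E' m} {p : E' n} {L : E' n →L[ℝ] E' m}
    (hP : HasFDerivAt P L p) :
    fderiv ℝ (fun y => (P y, ‖y‖ ^ 2)) p = L.prod (2 • innerSL ℝ p) :=
  (hP.prodMk (hasStrictFDerivAt_norm_sq p).hasFDerivAt).fderiv

lemma pair_surj {n m : ℕ} {P : E' n → E' m} {p : E' n} {L : E' n →L[ℝ] E' m}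
    (hP : HasFDerivAt P L p) (hsurj : Function.Surjective ⇑L) (v : E' n) (hv : L v = 0)
    (hiv : (inner ℝ p v : ℝ) ≠ 0) :
    Function.Surjective ⇑(fderiv ℝ (fun y => (P y, ‖y‖ ^ 2)) p) := by
  rw [fderiv_pair hP]
  rintro ⟨c, r⟩
  obtain ⟨u, hu⟩ := hsurj c
  refine ⟨u + ((r - 2 * (inner ℝ p u : ℝ)) / (2 * (inner ℝ p v : ℝ))) • v, ?_⟩
  have h2 : (2 * (inner ℝ p v : ℝ)) ≠ 0 := by
    simpa using hiv
  simp only [ContinuousLinearMap.prod_apply, map_add, map_smul, hu, hv, smul_zero,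
    ContinuousLinearMap.smul_apply, innerSL_apply_apply, Prod.smul_mk, Prod.mk_add_mk, smul_zero,
    add_zero, Prod.mk.injEq, smul_eq_mul]
  refine ⟨trivial, ?_⟩
  set iu : ℝ := inner ℝ p u with hiu
  set iv : ℝ := inner ℝ p v with hivv
  have h2' : iv ≠ 0 := hiv
  simp only [smul_eq_mul, nsmul_eq_mul, Nat.cast_ofNat]
  field_simp
  ring

lemma LF_surj {p : E' 4} (hs : p 0 ^ 2 + p 1 ^ 2 + 5 * p 2 ^ 4 ≠ 0) :
    Function.Surjective ⇑(LF p) := by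
  intro c
  set v : E' 4 := (WithLp.equiv 2 (Fin 4 → ℝ)).symm
    ![c 0, c 1, (c 2 - 2*p 0*p 2*c 0 - 2*p 1*p 2*c 1)/(p 0^2+p 1^2+5*p 2^4), 0] with hv
  have e0 : v 0 = c 0 := rfl
  have e1 : v 1 = c 1 := rfl
  have e2 : v 2 = (c 2 - 2*p 0*p 2*c 0 - 2*p 1*p 2*c 1)/(p 0^2+p 1^2+5*p 2^4) := rfl
  refine ⟨v, PiLp.ext fun i => ?_⟩
  fin_cases i
  · show LF p v 0 = c 0
    rw [LF_apply0, e0]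
  · show LF p v 1 = c 1
    rw [LF_apply1, e1]
  · show LF p v 2 = c 2
    rw [LF_apply2, e0, e1, e2]
    rw [mul_div_cancel₀ _ hs]
    ring

lemma s_zero {p : E' 4} (hs : p 0 ^ 2 + p 1 ^ 2 + 5 * p 2 ^ 4 = 0) :
    p 0 = 0 ∧ p 1 = 0 ∧ p 2 = 0 := by
  have e0 : p 0 ^ 2 = 0 := by nlinarith [sq_nonneg (p 1), sq_nonneg (p 2 ^ 2)]
  have e1 : p 1 ^ 2 = 0 := by nlinarith [sq_nonneg (p 0), sq_nonneg (p 2 ^ 2)]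
  have e2 : p 2 ^ 4 = 0 := by nlinarith [sq_nonneg (p 0), sq_nonneg (p 1)]
  exact ⟨pow_eq_zero_iff two_ne_zero |>.mp e0, pow_eq_zero_iff two_ne_zero |>.mp e1,
    pow_eq_zero_iff (by norm_num : (4:ℕ) ≠ 0) |>.mp e2⟩

lemma sing_F {p : E' 4} (hp : p ∈ Sing F18) :
    p 0 = 0 ∧ p 1 = 0 ∧ p 2 = 0 := by
  by_contra h
  apply hp
  rw [(hasFDerivAt_F18 p).fderiv]
  exact LF_surj (fun hs => h (s_zero hs))

lemma image_sing_F : F18 '' Sing F18 ⊆ {0} := by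
  rintro _ ⟨p, hp, rfl⟩
  obtain ⟨h0, h1, h2⟩ := sing_F hp
  show F18 p = 0
  ext i
  fin_cases i
  · show p 0 = 0; exact h0
  · show p 1 = 0; exact h1
  · show p 2 * (p 0 ^ 2 + p 1 ^ 2 + p 2 ^ 4) = 0; rw [h2]; ring

lemma tame_F : Tame F18 := by
  refine ⟨1, one_pos, ?_⟩
  have hsub : MilnorSet F18 \ Sing F18 ⊆ {p : E' 4 | p 3 = 0} := by
    rintro p ⟨hM, hS⟩
    simp only [Sing, Set.mem_setOf_eq, not_not] at hS
    by_contra hw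
    apply hM
    have hLsurj : Function.Surjective ⇑(LF p) := by
      rwa [(hasFDerivAt_F18 p).fderiv] at hS
    set v : E' 4 := (WithLp.equiv 2 (Fin 4 → ℝ)).symm ![0,0,0,1] with hvdef
    refine pair_surj (hasFDerivAt_F18 p) hLsurj v ?_ ?_
    · refine PiLp.ext fun i => ?_
      fin_cases i
      · show LF p v 0 = 0
        rw [LF_apply0]; rfl
      · show LF p v 1 = 0
        rw [LF_apply1]; rfl
      · show LF p v 2 = 0
        rw [LF_apply2]
        show _*(0:ℝ) + _*0 + _*0 = _
        simp
    · show (inner ℝ p v : ℝ) ≠ 0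
      rw [PiLp.inner_apply]
      have : ∀ i : Fin 4, (inner ℝ (p i) (v i) : ℝ) = p i * v i := fun i => by simp [mul_comm]
      simp only [this, Fin.sum_univ_four]
      have hv0 : v 0 = 0 := rfl
      have hv1 : v 1 = 0 := rfl
      have hv2 : v 2 = 0 := rfl
      have hv3 : v 3 = 1 := rfl
      rw [hv0, hv1, hv2, hv3]
      simpa using hw
  have hclosed : IsClosed {p : E' 4 | p 3 = 0} :=
    isClosed_eq (EuclideanSpace.proj (3 : Fin 4) : E' 4 →L[ℝ] ℝ).continuous continuous_const
  rintro p ⟨⟨hcl, hsing⟩, -⟩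
  have hw : p 3 = 0 :=
    closure_minimal (Set.Subset.trans Set.inter_subset_left hsub) hclosed hcl
  obtain ⟨h0, h1, h2⟩ := sing_F hsing
  show p = 0
  ext i
  fin_cases i
  · exact h0
  · exact h1
  · exact h2
  · exact hw


def L3 (a b c : ℝ) : E' 3 →L[ℝ] ℝ :=
  a • EuclideanSpace.proj 0 + b • EuclideanSpace.proj 1 + c • EuclideanSpace.proj 2

@[simp] lemma L3_apply (a b c : ℝ) (v : E' 3) :
    L3 a b c v = a * v 0 + b * v 1 + c * v 2 := by
  simp [L3]

lemma hproj3 (p : E' 3) (i : Fin 3) :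
    HasFDerivAt (fun x : E' 3 => x i) (EuclideanSpace.proj i : E' 3 →L[ℝ] ℝ) p :=
  (EuclideanSpace.proj i : E' 3 →L[ℝ] ℝ).hasFDerivAt

def LG (u : E' 3) : E' 3 →L[ℝ] E' 2 :=
  ((EuclideanSpace.equiv (Fin 2) ℝ).symm.toContinuousLinearMap).comp
    (ContinuousLinearMap.pi ![L3 (u 1) (u 0) 0, L3 0 (u 2) (u 1)])

lemma LG_apply0 (u v : E' 3) : LG u v 0 = u 1 * v 0 + u 0 * v 1 := by simp [LG]
lemma LG_apply1 (u v : E' 3) : LG u v 1 = u 2 * v 1 + u 1 * v 2 := by simp [LG]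

lemma hasFDerivAt_G18 (u : E' 3) : HasFDerivAt G18 (LG u) u := by
  have hg : HasFDerivAt (fun x : E' 3 => (![x 0 * x 1, x 1 * x 2] : Fin 2 → ℝ))
      (ContinuousLinearMap.pi ![L3 (u 1) (u 0) 0, L3 0 (u 2) (u 1)]) u := by
    rw [hasFDerivAt_pi']
    intro i
    rw [ContinuousLinearMap.proj_pi]
    fin_cases i
    · exact ((hproj3 u 0).mul (hproj3 u 1)).congr_fderiv (by ext v; simp; ring)
    · exact ((hproj3 u 1).mul (hproj3 u 2)).congr_fderiv (by ext v; simp; ring)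
  have := ((EuclideanSpace.equiv (Fin 2) ℝ).symm.toContinuousLinearMap).hasFDerivAt.comp u hg
  exact this

lemma LG_surj {u : E' 3} (hs : u 1 ≠ 0) : Function.Surjective ⇑(LG u) := by
  intro c
  set v : E' 3 := (WithLp.equiv 2 (Fin 3 → ℝ)).symm ![c 0 / u 1, 0, c 1 / u 1] with hv
  have e0 : v 0 = c 0 / u 1 := rfl
  have e1 : v 1 = 0 := rfl
  have e2 : v 2 = c 1 / u 1 := rfl
  refine ⟨v, PiLp.ext fun i => ?_⟩
  fin_cases i
  · show LG u v 0 = c 0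
    rw [LG_apply0, e0, e1]
    field_simp
    ring
  · show LG u v 1 = c 1
    rw [LG_apply1, e1, e2]
    field_simp
    ring

lemma sing_G {u : E' 3} (hu : u ∈ Sing G18) : u 1 = 0 := by
  by_contra h
  apply hu
  rw [(hasFDerivAt_G18 u).fderiv]
  exact LG_surj h

lemma image_sing_G : G18 '' Sing G18 ⊆ {0} := by
  rintro _ ⟨u, hu, rfl⟩
  have h1 := sing_G hu
  show G18 u = 0
  ext i
  fin_cases i
  · show u 0 * u 1 = 0; rw [h1]; ring
  · show u 1 * u 2 = 0; rw [h1]; ring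

lemma tame_G : Tame G18 := by
  refine ⟨1, one_pos, ?_⟩
  have hsub : MilnorSet G18 \ Sing G18 ⊆ {u : E' 3 | u 1 ^ 2 = u 0 ^ 2 + u 2 ^ 2} := by
    rintro u ⟨hM, hS⟩
    simp only [Sing, Set.mem_setOf_eq, not_not] at hS
    by_contra hw
    apply hM
    have hLsurj : Function.Surjective ⇑(LG u) := by
      rwa [(hasFDerivAt_G18 u).fderiv] at hS
    set v : E' 3 := (WithLp.equiv 2 (Fin 3 → ℝ)).symm ![-u 0, u 1, -u 2] with hvdef
    have e0 : v 0 = -u 0 := rfl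
    have e1 : v 1 = u 1 := rfl
    have e2 : v 2 = -u 2 := rfl
    refine pair_surj (hasFDerivAt_G18 u) hLsurj v ?_ ?_
    · refine PiLp.ext fun i => ?_
      fin_cases i
      · show LG u v 0 = 0
        rw [LG_apply0, e0, e1]; ring
      · show LG u v 1 = 0
        rw [LG_apply1, e1, e2]; ring
    · show (inner ℝ u v : ℝ) ≠ 0
      rw [PiLp.inner_apply]
      have hc : ∀ i : Fin 3, (inner ℝ (u i) (v i) : ℝ) = u i * v i := fun i => by simp [mul_comm]
      simp only [hc, Fin.sum_univ_three, e0, e1, e2]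
      intro hEq
      apply hw
      show u 1 ^ 2 = u 0 ^ 2 + u 2 ^ 2
      linear_combination hEq
  have hclosed : IsClosed {u : E' 3 | u 1 ^ 2 = u 0 ^ 2 + u 2 ^ 2} := by
    have c1 : Continuous fun u : E' 3 => u 1 ^ 2 :=
      ((EuclideanSpace.proj (1 : Fin 3) : E' 3 →L[ℝ] ℝ).continuous).pow 2
    have c02 : Continuous fun u : E' 3 => u 0 ^ 2 + u 2 ^ 2 :=
      (((EuclideanSpace.proj (0 : Fin 3) : E' 3 →L[ℝ] ℝ).continuous).pow 2).add
        (((EuclideanSpace.proj (2 : Fin 3) : E' 3 →L[ℝ] ℝ).continuous).pow 2)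
    exact isClosed_eq c1 c02
  rintro u ⟨⟨hcl, hsing⟩, -⟩
  have hCu : u 1 ^ 2 = u 0 ^ 2 + u 2 ^ 2 :=
    closure_minimal (Set.Subset.trans Set.inter_subset_left hsub) hclosed hcl
  have h1 := sing_G hsing
  have h0 : u 0 = 0 := by nlinarith [sq_nonneg (u 0), sq_nonneg (u 2)]
  have h2 : u 2 = 0 := by nlinarith [sq_nonneg (u 0), sq_nonneg (u 2)]
  show u = 0
  ext i
  fin_cases i
  · exact h0
  · exact h1
  · exact h2


def LH (p : E' 4) : E' 4 →L[ℝ] E' 2 :=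
  ((EuclideanSpace.equiv (Fin 2) ℝ).symm.toContinuousLinearMap).comp
    (ContinuousLinearMap.pi ![L4 (p 1) (p 0) 0 0,
      L4 (2*p 0*p 1*p 2) (p 2*((p 0^2+p 1^2+p 2^4)+2*p 1^2)) (p 1*((p 0^2+p 1^2+p 2^4)+4*p 2^4)) 0])

lemma LH_apply0 (p v : E' 4) : LH p v 0 = p 1 * v 0 + p 0 * v 1 := by simp [LH]
lemma LH_apply1 (p v : E' 4) : LH p v 1 = (2*p 0*p 1*p 2) * v 0
    + (p 2*((p 0^2+p 1^2+p 2^4)+2*p 1^2)) * v 1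
    + (p 1*((p 0^2+p 1^2+p 2^4)+4*p 2^4)) * v 2 := by
  simp [LH]

lemma hH1comp (p : E' 4) :
    HasFDerivAt (fun x : E' 4 => x 1 * (x 2 * (x 0 ^ 2 + x 1 ^ 2 + x 2 ^ 4)))
      (L4 (2*p 0*p 1*p 2) (p 2*((p 0^2+p 1^2+p 2^4)+2*p 1^2))
        (p 1*((p 0^2+p 1^2+p 2^4)+4*p 2^4)) 0) p := by
  have hfun : (fun x : E' 4 => x 1 * (x 2 * (x 0 ^ 2 + x 1 ^ 2 + x 2 ^ 4)))
      = (fun x : E' 4 => x 1 * (x 2 * (x 0 * x 0 + x 1 * x 1 + x 2 * x 2 * (x 2 * x 2)))) := by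
    funext x; ring
  rw [hfun]
  have key := (hproj4 p 1).mul ((hproj4 p 2).mul ((((hproj4 p 0).mul (hproj4 p 0)).add
    ((hproj4 p 1).mul (hproj4 p 1))).add
    (((hproj4 p 2).mul (hproj4 p 2)).mul ((hproj4 p 2).mul (hproj4 p 2)))))
  refine key.congr_fderiv ?_
  ext v
  simp
  ring

lemma hasFDerivAt_H18 (p : E' 4) : HasFDerivAt H18 (LH p) p := by
  have hg : HasFDerivAt
      (fun x : E' 4 => (![x 0 * x 1, x 1 * (x 2 * (x 0 ^ 2 + x 1 ^ 2 + x 2 ^ 4))] : Fin 2 → ℝ))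
      (ContinuousLinearMap.pi ![L4 (p 1) (p 0) 0 0,
        L4 (2*p 0*p 1*p 2) (p 2*((p 0^2+p 1^2+p 2^4)+2*p 1^2))
          (p 1*((p 0^2+p 1^2+p 2^4)+4*p 2^4)) 0]) p := by
    rw [hasFDerivAt_pi']
    intro i
    rw [ContinuousLinearMap.proj_pi]
    fin_cases i
    · exact ((hproj4 p 0).mul (hproj4 p 1)).congr_fderiv (by ext v; simp; ring)
    · simpa using hH1comp p
  have := ((EuclideanSpace.equiv (Fin 2) ℝ).symm.toContinuousLinearMap).hasFDerivAt.comp p hg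
  exact this

lemma LH_surj {p : E' 4} (h1 : p 1 ≠ 0) : Function.Surjective ⇑(LH p) := by
  have hQ : (p 0^2+p 1^2+p 2^4) + 4*p 2^4 > 0 := by positivity
  have hden : p 1 * ((p 0^2+p 1^2+p 2^4)+4*p 2^4) ≠ 0 := mul_ne_zero h1 (ne_of_gt hQ)
  intro c
  set v : E' 4 := (WithLp.equiv 2 (Fin 4 → ℝ)).symm
    ![c 0 / p 1, 0,
      (c 1 - (2*p 0*p 1*p 2) * (c 0 / p 1)) / (p 1*((p 0^2+p 1^2+p 2^4)+4*p 2^4)), 0] with hv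
  have e0 : v 0 = c 0 / p 1 := rfl
  have e1 : v 1 = 0 := rfl
  have e2 : v 2 = (c 1 - (2*p 0*p 1*p 2) * (c 0 / p 1))
      / (p 1*((p 0^2+p 1^2+p 2^4)+4*p 2^4)) := rfl
  refine ⟨v, PiLp.ext fun i => ?_⟩
  fin_cases i
  · show LH p v 0 = c 0
    rw [LH_apply0, e0, e1]
    field_simp
    ring
  · show LH p v 1 = c 1
    rw [LH_apply1, e0, e1, e2]
    field_simp
    ring

lemma sing_H_iff (p : E' 4) : p ∈ Sing H18 ↔ p 1 = 0 := by
  constructor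
  · intro hp
    by_contra h
    exact hp ((hasFDerivAt_H18 p).fderiv ▸ LH_surj h)
  · intro h1 hsurj
    rw [(hasFDerivAt_H18 p).fderiv] at hsurj
    obtain ⟨a, ha⟩ := hsurj ((WithLp.equiv 2 (Fin 2 → ℝ)).symm ![1, 0])
    obtain ⟨b, hb⟩ := hsurj ((WithLp.equiv 2 (Fin 2 → ℝ)).symm ![0, 1])
    have ha0 : LH p a 0 = 1 := by rw [ha]; rfl
    have ha1 : LH p a 1 = 0 := by rw [ha]; rfl
    have hb0 : LH p b 0 = 0 := by rw [hb]; rfl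
    have hb1 : LH p b 1 = 1 := by rw [hb]; rfl
    rw [LH_apply0, h1] at ha0 hb0
    rw [LH_apply1, h1] at ha1 hb1
    have : (1:ℝ) = 0 := by nlinarith [ha0, ha1, hb0, hb1]
    norm_num at this

lemma milnor_H {p : E' 4} (hw : p 3 = 0) (hy : p 1 ≠ 0) (hz : p 2 ≠ 0)
    (hD : p 2^2*(p 0^2+p 1^2+p 2^4) + 2*p 1^2*p 2^2 - 2*p 0^2*p 2^2
        + (p 0^2 - p 1^2)*((p 0^2+p 1^2+p 2^4) + 4*p 2^4) = 0) :
    p ∈ MilnorSet H18 := by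
  intro hsurj
  rw [fderiv_pair (hasFDerivAt_H18 p)] at hsurj
  obtain ⟨v, hv⟩ := hsurj ((WithLp.equiv 2 (Fin 2 → ℝ)).symm
    ![2*p 0*p 1*(2*p 2^2 - ((p 0^2+p 1^2+p 2^4) + 4*p 2^4)), -(2*p 1*p 2)],
    p 1^2*((p 0^2+p 1^2+p 2^4) + 4*p 2^4))
  have h1 : LH p v = (WithLp.equiv 2 (Fin 2 → ℝ)).symm
      ![2*p 0*p 1*(2*p 2^2 - ((p 0^2+p 1^2+p 2^4) + 4*p 2^4)), -(2*p 1*p 2)] :=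
    congrArg Prod.fst hv
  have h2 : (2:ℕ) • (inner ℝ p v : ℝ) = p 1^2*((p 0^2+p 1^2+p 2^4) + 4*p 2^4) :=
    congrArg Prod.snd hv
  have h10 : p 1 * v 0 + p 0 * v 1
      = 2*p 0*p 1*(2*p 2^2 - ((p 0^2+p 1^2+p 2^4) + 4*p 2^4)) := by
    rw [← LH_apply0, h1]; rfl
  have h11 : (2*p 0*p 1*p 2) * v 0 + (p 2*((p 0^2+p 1^2+p 2^4)+2*p 1^2)) * v 1
      + (p 1*((p 0^2+p 1^2+p 2^4)+4*p 2^4)) * v 2 = -(2*p 1*p 2) := by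
    rw [← LH_apply1, h1]; rfl
  have h2' : 2 * (p 0 * v 0 + p 1 * v 1 + p 2 * v 2 + p 3 * v 3)
      = p 1^2*((p 0^2+p 1^2+p 2^4) + 4*p 2^4) := by
    have hinner : (inner ℝ p v : ℝ) = p 0 * v 0 + p 1 * v 1 + p 2 * v 2 + p 3 * v 3 := by
      rw [PiLp.inner_apply]
      have hc : ∀ i : Fin 4, (inner ℝ (p i) (v i) : ℝ) = p i * v i := fun i => by simp [mul_comm]
      simp [hc, Fin.sum_univ_four]
      ring
    rw [← hinner, ← h2]
    simp [two_smul]; ring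
  have hzero : (2*p 0*p 1*(2*p 2^2 - ((p 0^2+p 1^2+p 2^4) + 4*p 2^4)))^2
      + (2*p 1*p 2)^2 + (p 1^2*((p 0^2+p 1^2+p 2^4) + 4*p 2^4))^2 = 0 := by
    linear_combination (-(2*p 0*p 1*(2*p 2^2 - ((p 0^2+p 1^2+p 2^4) + 4*p 2^4)))) * h10
      + (2*p 1*p 2) * h11
      + (-(p 1^2*((p 0^2+p 1^2+p 2^4) + 4*p 2^4))) * h2'
      + (-2*p 1*v 1) * hD
      + (2*(p 1^2*((p 0^2+p 1^2+p 2^4) + 4*p 2^4))*v 3) * hw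
  have hβ : (2*p 1*p 2)^2 > 0 := by positivity
  nlinarith [sq_nonneg (2*p 0*p 1*(2*p 2^2 - ((p 0^2+p 1^2+p 2^4) + 4*p 2^4))),
    sq_nonneg (p 1^2*((p 0^2+p 1^2+p 2^4) + 4*p 2^4))]

def auxC (c b : ℝ) : ℝ := c^6 + 3*b*c^2 - b^2 - 5*c^4*b
def auxD (c b : ℝ) : ℝ := (c^2 - 5*c^4)^2 - 4*(auxC c b)
def auxA (c b : ℝ) : ℝ := ((c^2 - 5*c^4) - Real.sqrt (auxD c b))/2

section aux
variable {c b : ℝ} (hc0 : 0 < c) (hc1 : c ≤ 1/10) (hb0 : 0 ≤ b) (hb1 : b ≤ c^4)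
include hc0 hc1 hb0 hb1

lemma hc2 : c^2 ≤ 1/100 := by nlinarith

lemma auxC_pos : 0 < auxC c b := by
  have h2 : c^2 ≤ 1/100 := by nlinarith
  have h3 : 0 ≤ 3*c^2 - b - 5*c^4 := by nlinarith [sq_nonneg (c^2)]
  have h4 : 0 ≤ b*(3*c^2 - b - 5*c^4) := mul_nonneg hb0 h3
  have h5 : 0 < c^6 := by positivity
  unfold auxC; nlinarith

lemma auxC_le : auxC c b ≤ 4*c^6 := by
  have h2 : 0 ≤ c^2 := sq_nonneg c
  have h3 : 3*b*c^2 ≤ 3*c^6 := by nlinarith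
  have h4 : 0 ≤ b^2 := sq_nonneg b
  have h5 : 0 ≤ 5*c^4*b := by positivity
  unfold auxC; nlinarith

lemma auxD_nonneg : 0 ≤ auxD c b := by
  have h1 := auxC_le hc0 hc1 hb0 hb1
  have h2 : c^2 ≤ 1/100 := by nlinarith
  have h4 : 0 < c^4 := by positivity
  unfold auxD
  nlinarith [sq_nonneg (c^2 - 5*c^4), sq_nonneg (c^4), pow_pos hc0 8, pow_pos hc0 6]

lemma auxB_pos : 0 < c^2 - 5*c^4 := by
  have h2 : c^2 ≤ 1/100 := by nlinarith
  nlinarith [pow_pos hc0 2, sq_nonneg (c^2)]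

lemma aux_sqrt_lt : Real.sqrt (auxD c b) < c^2 - 5*c^4 := by
  refine (Real.sqrt_lt' (auxB_pos hc0 hc1 hb0 hb1)).mpr ?_
  have h1 := auxC_pos hc0 hc1 hb0 hb1
  unfold auxD
  linarith

lemma auxA_pos : 0 < auxA c b := by
  have h1 := aux_sqrt_lt hc0 hc1 hb0 hb1
  unfold auxA; linarith

lemma auxA_le : auxA c b ≤ c^2/2 := by
  have h1 := Real.sqrt_nonneg (auxD c b)
  have h4 : 0 < c^4 := by positivity
  unfold auxA; nlinarith

lemma auxA_quad : (auxA c b)^2 + (5*c^4 - c^2)*(auxA c b) + auxC c b = 0 := by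
  have hs : Real.sqrt (auxD c b) ^ 2 = (c^2 - 5*c^4)^2 - 4*(auxC c b) := by
    rw [Real.sq_sqrt (auxD_nonneg hc0 hc1 hb0 hb1)]; rfl
  unfold auxA
  linear_combination (1/4) * hs

end aux

lemma auxA_cont (c : ℝ) : Continuous (fun b => auxA c b) := by
  unfold auxA auxD auxC
  have h1 : Continuous fun b : ℝ => (c^2 - 5*c^4)^2 - 4*(c^6 + 3*b*c^2 - b^2 - 5*c^4*b) := by
    continuity
  exact ((continuous_const.sub (Real.continuous_sqrt.comp h1)).div_const 2)

lemma norm_sq_E4 (x : E' 4) : ‖x‖^2 = (x 0)^2 + (x 1)^2 + (x 2)^2 + (x 3)^2 := by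
  rw [EuclideanSpace.norm_eq, Real.sq_sqrt (by positivity)]
  simp [Fin.sum_univ_four, Real.norm_eq_abs, sq_abs]

lemma not_tame_H : ∀ ε > 0, ∃ x ∈ ball (0 : E' 4) ε, x ≠ 0 ∧
    x ∈ Sing H18 ∩ closure ((MilnorSet H18 \ Sing H18) ∩ ball (0 : E' 4) ε) := by
  intro ε hε
  set c : ℝ := min (ε/2) (1/10) with hcdef
  have hc0 : 0 < c := lt_min (by linarith) (by norm_num)
  have hc1 : c ≤ 1/10 := min_le_right _ _
  have hcε : c ≤ ε/2 := min_le_left _ _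
  set Pt : ℝ → E' 4 := fun t => (WithLp.equiv 2 (Fin 4 → ℝ)).symm
    ![Real.sqrt (auxA c (t^2)), t, c, 0] with hPtdef
  have e0 : ∀ t, Pt t 0 = Real.sqrt (auxA c (t^2)) := fun _ => rfl
  have e1 : ∀ t, Pt t 1 = t := fun _ => rfl
  have e2 : ∀ t, Pt t 2 = c := fun _ => rfl
  have e3 : ∀ t, Pt t 3 = 0 := fun _ => rfl
  have hball : ∀ t : ℝ, 0 ≤ t → t ≤ c^2 → Pt t ∈ ball (0 : E' 4) ε := by
    intro t ht0 ht1
    have hb0 : (0:ℝ) ≤ t^2 := sq_nonneg t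
    have hb1 : t^2 ≤ c^4 := by nlinarith
    have hA := auxA_pos hc0 hc1 hb0 hb1
    have hAle := auxA_le hc0 hc1 hb0 hb1
    have hx2 : (Pt t 0)^2 = auxA c (t^2) := by rw [e0]; exact Real.sq_sqrt hA.le
    rw [mem_ball_zero_iff]
    have hns : ‖Pt t‖^2 < ε^2 := by
      rw [norm_sq_E4, hx2, e1, e2, e3]
      have hc2' : c^2 ≤ 1/100 := by nlinarith
      have hcε2 : c^2 ≤ ε^2/4 := by nlinarith
      nlinarith [sq_nonneg c, mul_pos hε hε]
    exact lt_of_pow_lt_pow_left₀ 2 hε.le hns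
  have hmem : ∀ t : ℝ, 0 < t → t ≤ c^2 →
      Pt t ∈ (MilnorSet H18 \ Sing H18) ∩ ball (0 : E' 4) ε := by
    intro t ht0 ht1
    have hb0 : (0:ℝ) ≤ t^2 := sq_nonneg t
    have hb1 : t^2 ≤ c^4 := by nlinarith
    have hA := auxA_pos hc0 hc1 hb0 hb1
    have hx2 : (Pt t 0)^2 = auxA c (t^2) := by rw [e0]; exact Real.sq_sqrt hA.le
    refine ⟨⟨?_, ?_⟩, hball t ht0.le ht1⟩
    · apply milnor_H (e3 t) (by rw [e1]; exact ht0.ne') (by rw [e2]; exact hc0.ne')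
      rw [e1, e2, hx2]
      have hq := auxA_quad hc0 hc1 hb0 hb1
      unfold auxC at hq
      linear_combination hq
    · intro hsing
      have := (sing_H_iff _).mp hsing
      rw [e1] at this
      exact ht0.ne' this
  refine ⟨Pt 0, hball 0 le_rfl (by positivity), ?_, ?_, ?_⟩
  · intro h
    have h2 : (Pt 0) 2 = 0 := by rw [h]; rfl
    rw [e2] at h2
    exact hc0.ne' h2
  · exact (sing_H_iff _).mpr (e1 0)
  · have hcontg : Continuous (fun t : ℝ =>
        (![Real.sqrt (auxA c (t^2)), t, c, 0] : Fin 4 → ℝ)) := by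
      refine continuous_pi fun i => ?_
      fin_cases i
      · exact Real.continuous_sqrt.comp ((auxA_cont c).comp (continuous_pow 2))
      · exact continuous_id
      · exact continuous_const
      · exact continuous_const
    have hcont : Continuous Pt := by
      have := ((EuclideanSpace.equiv (Fin 4) ℝ).symm.continuous).comp hcontg
      exact this
    have htend0 : Filter.Tendsto (fun n : ℕ => c^2/((n:ℝ)+1)) Filter.atTop (𝓝 0) := by
      have h := tendsto_one_div_add_atTop_nhds_zero_nat.const_mul (c^2)
      simpa [div_eq_mul_inv, mul_comm] using h
    have htend : Filter.Tendsto (fun n : ℕ => Pt (c^2/((n:ℝ)+1))) Filter.atTop (𝓝 (Pt 0)) := by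
      have := (hcont.tendsto 0).comp htend0
      exact this
    refine mem_closure_of_tendsto htend ?_
    filter_upwards with n
    refine hmem _ (by positivity) ?_
    have hn1 : (1:ℝ) ≤ (n:ℝ)+1 := by
      have : (0:ℝ) ≤ (n:ℝ) := Nat.cast_nonneg n
      linarith
    exact div_le_self (sq_nonneg c) hn1

/-- For the above F, G and H = G ∘ F, the maps F and G are tame with
Disc F ⊆ {0} and Disc G ⊆ {0}, but H is NOT tame: for every ε > 0 there is a nonzero
point of B_ε lying in Sing H ∩ closure((M(H) \ Sing H) ∩ B_ε). -/
theorem stmt_18 :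
    H18 = G18 ∘ F18 ∧
    Tame F18 ∧ Tame G18 ∧
    F18 '' Sing F18 ⊆ {0} ∧ G18 '' Sing G18 ⊆ {0} ∧
    ∀ ε > 0, ∃ x ∈ ball (0 : EuclideanSpace ℝ (Fin 4)) ε, x ≠ 0 ∧
      x ∈ Sing H18 ∩ closure ((MilnorSet H18 \ Sing H18) ∩ ball (0 : EuclideanSpace ℝ (Fin 4)) ε) := by
  refine ⟨rfl, tame_F, tame_G, image_sing_F, image_sing_G, not_tame_H⟩
end
end
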